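/- Let n ≥ 1 and suppose f is a continuous probability density on ℝ that is strictly positive on its support, so that F is a continuous strictly increasing bijection from the support onto (0,1); assume all entropy integrals below exist and are finite. Then the difference between the Shannon entropy of a perfect RSS and of an SRS of size n is distribution-free: Σ_{i=1}^n H(f_(i)) − n·H(f) = Σ_{i=1}^n H(U_(i)), where H(U_(i)) = -∫_0^1 b_i(u)·log b_i(u) du is the entropy of the Beta(i, n-i+1) density b_i(u) = i·C(n,i)·u^{i-1}·(1-u)^{n-i}. -/

import Mathlib

open MeasureTheory Real

/-- Cumulative distribution function of a density `f`. -/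
noncomputable def cdfOf (f : ℝ → ℝ) (x : ℝ) : ℝ := ∫ t in Set.Iic x, f t

/-- Density of the `i`-th order statistic from a sample of size `n` with parent density `f`. -/
noncomputable def osDen (f : ℝ → ℝ) (n i : ℕ) (x : ℝ) : ℝ :=
  (i : ℝ) * (n.choose i : ℝ) * (cdfOf f x) ^ (i - 1) * (1 - cdfOf f x) ^ (n - i) * f x

/-- Shannon entropy of a density `g`. -/
noncomputable def shannonH (g : ℝ → ℝ) : ℝ := -∫ x, g x * Real.log (g x)

/-- Beta(i, n-i+1) density: `b_i(u) = i·C(n,i)·u^(i-1)·(1-u)^(n-i)`. -/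
noncomputable def betaDen (n i : ℕ) (u : ℝ) : ℝ :=
  (i : ℝ) * (n.choose i : ℝ) * u ^ (i - 1) * (1 - u) ^ (n - i)

/-!
Writing `F` for the CDF, the `i`-th order-statistic density is `f_(i) = b_i(F) · f`, and
`(a b) log (a b) = b · a log a + a · b log b` splits `f_(i) log f_(i)` into
`f · (b_i log b_i)(F)` and `b_i(F) · f log f`. The substitution `u = F(x)`, legitimate since
`F' = f` and `F` maps the support of `f` bijectively onto `(0, 1)`, turns the integral of the
first piece into `∫₀¹ b_i log b_i`. The second pieces sum to `n · f log f` because the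
`b_i(u) = n · C(n-1, i-1) u^(i-1) (1-u)^(n-i)` sum to `n (u + (1 - u))^(n-1) = n`.
-/

theorem sum_betaDen (n : ℕ) (u : ℝ) : ∑ i ∈ Finset.Icc 1 n, betaDen n i u = n := by
  cases n with
  | zero => simp
  | succ m =>
    have hterm : ∀ j ∈ Finset.range (m + 1),
        betaDen (m + 1) (1 + j) u = (m + 1) * (u ^ j * (1 - u) ^ (m - j) * m.choose j) := by
      intro j _
      have hchoose :
          ((1 + j : ℕ) : ℝ) * ((m + 1).choose (1 + j) : ℝ) = (m + 1) * m.choose j := by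
        rw [add_comm 1 j]
        exact_mod_cast ((Nat.add_one_mul_choose_eq m j).trans (mul_comm _ _)).symm
      rw [betaDen, hchoose, Nat.add_sub_cancel_left, show m + 1 - (1 + j) = m - j by omega]
      ring
    calc ∑ i ∈ Finset.Icc 1 (m + 1), betaDen (m + 1) i u
        = ∑ j ∈ Finset.range (m + 1), betaDen (m + 1) (1 + j) u := by
          rw [← Finset.Ico_add_one_right_eq_Icc, Finset.sum_Ico_eq_sum_range, Nat.add_sub_cancel]
      _ = (m + 1) * (u + (1 - u)) ^ m := by
          rw [Finset.sum_congr rfl hterm, ← Finset.mul_sum, add_pow]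
      _ = (m + 1 : ℕ) := by norm_num

theorem continuous_betaDen (n i : ℕ) : Continuous (betaDen n i) := by
  unfold betaDen
  fun_prop

theorem osDen_eq_betaDen_cdfOf_mul (f : ℝ → ℝ) (n i : ℕ) (x : ℝ) :
    osDen f n i x = betaDen n i (cdfOf f x) * f x := by
  rw [osDen, betaDen]

theorem mul_mul_log_mul (a b : ℝ) :
    a * b * log (a * b) = b * (a * log a) + a * (b * log b) := by
  have h := negMulLog_mul a b
  simp only [negMulLog] at h
  linarith

section cdfOf

variable {f : ℝ → ℝ}

theorem hasDerivAt_cdfOf (hf : Continuous f) (hfi : Integrable f) (x : ℝ) :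
    HasDerivAt (cdfOf f) (f x) x := by
  have hcdf : (fun y => cdfOf f 0 + ∫ t in (0 : ℝ)..y, f t) = cdfOf f := by
    funext y
    rw [← intervalIntegral.integral_Iic_sub_Iic hfi.integrableOn hfi.integrableOn, cdfOf, cdfOf]
    ring
  rw [← hcdf]
  exact (intervalIntegral.integral_hasDerivAt_right hfi.intervalIntegrable
    (hf.stronglyMeasurableAtFilter _ _) hf.continuousAt).const_add _

theorem cdfOf_nonneg (hf_nonneg : ∀ x, 0 ≤ f x) (x : ℝ) : 0 ≤ cdfOf f x :=
  setIntegral_nonneg measurableSet_Iic fun t _ => hf_nonneg t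

theorem cdfOf_le_one (hf_nonneg : ∀ x, 0 ≤ f x) (hf_int : ∫ x, f x = 1) (x : ℝ) :
    cdfOf f x ≤ 1 :=
  hf_int ▸ setIntegral_le_integral (integrable_of_integral_eq_one hf_int)
    (ae_of_all _ hf_nonneg)

theorem integrable_comp_cdfOf_mul (hf : Continuous f) (hf_nonneg : ∀ x, 0 ≤ f x)
    (hf_int : ∫ x, f x = 1) {g h : ℝ → ℝ} (hg : Continuous g) (hh : Integrable h) :
    Integrable (fun x => g (cdfOf f x) * h x) := by
  have hfi : Integrable f := integrable_of_integral_eq_one hf_int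
  obtain ⟨C, hC⟩ := (isCompact_Icc (a := (0 : ℝ)) (b := 1)).exists_bound_of_continuousOn
    hg.continuousOn
  have hcdf : Continuous (cdfOf f) :=
    continuous_iff_continuousAt.mpr fun x => (hasDerivAt_cdfOf hf hfi x).continuousAt
  exact hh.bdd_mul (hg.comp hcdf).aestronglyMeasurable
    (ae_of_all _ fun x => hC _ ⟨cdfOf_nonneg hf_nonneg x, cdfOf_le_one hf_nonneg hf_int x⟩)

end cdfOf

theorem setIntegral_eq_integral_mul_comp_of_bijOn_support {f F : ℝ → ℝ} {s : Set ℝ}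
    (hf : Measurable f) (hf_nonneg : ∀ x, 0 ≤ f x) (hF : ∀ x, HasDerivAt F (f x) x)
    (hbij : Set.BijOn F (Function.support f) s) (g : ℝ → ℝ) :
    ∫ u in s, g u = ∫ x, f x * g (F x) := by
  have hsupp : MeasurableSet (Function.support f) := measurableSet_support hf
  rw [← hbij.image_eq, integral_image_eq_integral_abs_deriv_smul hsupp
    (fun x _ => (hF x).hasDerivWithinAt) hbij.injOn g]
  simp_rw [abs_of_nonneg (hf_nonneg _), smul_eq_mul]
  exact setIntegral_eq_integral_of_forall_compl_eq_zero fun x hx => by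
    rw [Function.notMem_support.mp hx, zero_mul]

theorem integral_osDen_mul_log {f : ℝ → ℝ} (hf : Continuous f) (hf_nonneg : ∀ x, 0 ≤ f x)
    (hf_int : ∫ x, f x = 1) (hF_bij : Set.BijOn (cdfOf f) (Function.support f) (Set.Ioo 0 1))
    (hfl : Integrable (fun x => f x * log (f x))) (n i : ℕ)
    (hil : Integrable (fun x => osDen f n i x * log (osDen f n i x))) :
    ∫ x, osDen f n i x * log (osDen f n i x)
      = (∫ u in Set.Ioo (0 : ℝ) 1, betaDen n i u * log (betaDen n i u))
        + ∫ x, betaDen n i (cdfOf f x) * (f x * log (f x)) := by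
  have hsplit : ∀ x, osDen f n i x * log (osDen f n i x)
      = f x * (betaDen n i (cdfOf f x) * log (betaDen n i (cdfOf f x)))
        + betaDen n i (cdfOf f x) * (f x * log (f x)) := fun x => by
    rw [osDen_eq_betaDen_cdfOf_mul, mul_mul_log_mul]
  have hfl_part : Integrable (fun x => betaDen n i (cdfOf f x) * (f x * log (f x))) :=
    integrable_comp_cdfOf_mul hf hf_nonneg hf_int (continuous_betaDen n i) hfl
  have hbeta_part : Integrable
      (fun x => f x * (betaDen n i (cdfOf f x) * log (betaDen n i (cdfOf f x)))) :=
    (hil.sub hfl_part).congr (ae_of_all _ fun x => by simp only [Pi.sub_apply, hsplit]; ring)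
  have hF : ∀ x, HasDerivAt (cdfOf f) (f x) x :=
    hasDerivAt_cdfOf hf (integrable_of_integral_eq_one hf_int)
  simp_rw [hsplit]
  rw [integral_add hbeta_part hfl_part, setIntegral_eq_integral_mul_comp_of_bijOn_support
    hf.measurable hf_nonneg hF hF_bij]

theorem shannon_entropy_difference_distribution_free_general (n : ℕ) (f : ℝ → ℝ)
    (hf_cont : Continuous f) (hf_nonneg : ∀ x, 0 ≤ f x)
    (hf_int : ∫ x, f x = 1)
    (hF_bij : Set.BijOn (cdfOf f) (Function.support f) (Set.Ioo 0 1))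
    (hfl : Integrable (fun x => f x * Real.log (f x)))
    (hil : ∀ i ∈ Finset.Icc 1 n,
      Integrable (fun x => osDen f n i x * Real.log (osDen f n i x))) :
    (∑ i ∈ Finset.Icc 1 n, shannonH (osDen f n i)) - (n : ℝ) * shannonH f
      = ∑ i ∈ Finset.Icc 1 n,
          -(∫ u in Set.Ioo (0:ℝ) 1, betaDen n i u * Real.log (betaDen n i u)) := by
  have hsplit := fun i (hi : i ∈ Finset.Icc 1 n) =>
    integral_osDen_mul_log hf_cont hf_nonneg hf_int hF_bij hfl n i (hil i hi)
  have hflog_sum : ∑ i ∈ Finset.Icc 1 n, ∫ x, betaDen n i (cdfOf f x) * (f x * log (f x))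
      = n * ∫ x, f x * log (f x) := by
    rw [← integral_finsetSum _ fun i _ => integrable_comp_cdfOf_mul hf_cont hf_nonneg hf_int
      (continuous_betaDen n i) hfl, ← integral_const_mul]
    simp_rw [← Finset.sum_mul, sum_betaDen]
  simp only [shannonH, Finset.sum_neg_distrib]
  rw [Finset.sum_congr rfl hsplit, Finset.sum_add_distrib, hflog_sum]
  ring

/-- The difference between the Shannon entropy of a perfect ranked set sample and of a simple
random sample of size `n` is distribution-free:
`Σ_{i=1}^n H(f_(i)) − n·H(f) = Σ_{i=1}^n H(U_(i))`. -/
theorem shannon_entropy_difference_distribution_free (n : ℕ) (hn : 1 ≤ n) (f : ℝ → ℝ)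
    (hf_cont : Continuous f) (hf_nonneg : ∀ x, 0 ≤ f x)
    (hf_int : ∫ x, f x = 1)
    (hf_pos : ∀ x ∈ Function.support f, 0 < f x)
    (hF_mono : StrictMonoOn (cdfOf f) (Function.support f))
    (hF_bij : Set.BijOn (cdfOf f) (Function.support f) (Set.Ioo 0 1))
    (hfl : Integrable (fun x => f x * Real.log (f x)))
    (hil : ∀ i ∈ Finset.Icc 1 n,
      Integrable (fun x => osDen f n i x * Real.log (osDen f n i x)))
    (hbl : ∀ i ∈ Finset.Icc 1 n,
      IntegrableOn (fun u => betaDen n i u * Real.log (betaDen n i u)) (Set.Ioo 0 1)) :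
    (∑ i ∈ Finset.Icc 1 n, shannonH (osDen f n i)) - (n : ℝ) * shannonH f
      = ∑ i ∈ Finset.Icc 1 n,
          -(∫ u in Set.Ioo (0:ℝ) 1, betaDen n i u * Real.log (betaDen n i u)) :=
  shannon_entropy_difference_distribution_free_general n f hf_cont hf_nonneg hf_int hF_bij hfl hil
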